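/- Let m ≥ 3, let j ≥ 1 be an integer, let x ∈ ℤ^m, and let B = ∏_{i=1}^m ([a_i, a_i + s_i] ∩ ℤ) be a box in ℤ^m containing x with side lengths s_1, …, s_m, such that each of the 2m faces of B contains at least one point at ℓ¹-distance at least j from x. Then Σ_{i=1}^m s_i ≥ j·m/(m-1). -/
import Mathlib


/-!
Common setup: Ising lattice gauge theory (structure group `ℤ₂`) on `ℤ^m`,
following Forsström–Viklund, "Free energy and quark potential in Ising lattice
gauge theory via cluster expansion".

Since the structure group is `ℤ₂`, a `k`-form is determined by its values on
(representatives of) positively oriented cells, so we work with unoriented cells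
throughout: an edge is a pair `(v, dir)` (the edge from `v` to `v + e_dir`), a
plaquette is `(v, i, j)` (positively oriented when `i < j`), etc.
-/

noncomputable section

open Filter Topology
open scoped BigOperators Classical

namespace LGT

/-- Points of the lattice `ℤ^m`. -/
abbrev Pt (m : ℕ) := Fin m → ℤ

/-- The `i`-th unit vector of `ℤ^m`. -/
def unit (m : ℕ) (i : Fin m) : Pt m := fun j => if j = i then 1 else 0

/-- An edge of `ℤ^m`, from `v` to `v + unit dir`. -/
structure Edge (m : ℕ) where
  v : Pt m
  dir : Fin m
deriving DecidableEq

/-- A plaquette of `ℤ^m`, spanned at `v` by the directions `i, j`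
(positively oriented when `i < j`). -/
structure Plaq (m : ℕ) where
  v : Pt m
  i : Fin m
  j : Fin m
deriving DecidableEq

/-- A 3-cell of `ℤ^m`, spanned at `v` by the directions `i, j, k`. -/
structure Cell3 (m : ℕ) where
  v : Pt m
  i : Fin m
  j : Fin m
  k : Fin m
deriving DecidableEq

/-- `x ∈ B_N = [-N, N]^m`. -/
def inBox (m N : ℕ) (x : Pt m) : Prop := ∀ i, |x i| ≤ (N : ℤ)

/-- The box `B_N` as a finite set. -/
def boxFinset (m N : ℕ) : Finset (Pt m) := Finset.Icc (fun _ => -(N : ℤ)) (fun _ => (N : ℤ))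

/-- The edges of `B_N` (both endpoints in `B_N`); this is `E_N = C_1(B_N)` up to orientation. -/
def edgeFinset (m N : ℕ) : Finset (Edge m) :=
  ((boxFinset m N ×ˢ (Finset.univ : Finset (Fin m))).image
      (fun x => (⟨x.1, x.2⟩ : Edge m))).filter
    (fun e => inBox m N e.v ∧ inBox m N (e.v + unit m e.dir))

/-- The positively oriented plaquettes of `B_N` (all four vertices in `B_N`);
this is `P_N^+ = C_2(B_N)^+`. -/
def plaqFinset (m N : ℕ) : Finset (Plaq m) :=
  ((boxFinset m N ×ˢ
        ((Finset.univ : Finset (Fin m)) ×ˢ (Finset.univ : Finset (Fin m)))).image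
      (fun x => (⟨x.1, x.2.1, x.2.2⟩ : Plaq m))).filter
    (fun p => p.i < p.j ∧ inBox m N p.v ∧ inBox m N (p.v + unit m p.i + unit m p.j))

/-- The (positively oriented) 3-cells of `B_N` (all vertices in `B_N`). -/
def cell3Finset (m N : ℕ) : Finset (Cell3 m) :=
  ((boxFinset m N ×ˢ
        ((Finset.univ : Finset (Fin m)) ×ˢ (Finset.univ : Finset (Fin m)) ×ˢ
          (Finset.univ : Finset (Fin m)))).image
      (fun x => (⟨x.1, x.2.1, x.2.2.1, x.2.2.2⟩ : Cell3 m))).filter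
    (fun c => c.i < c.j ∧ c.j < c.k ∧ inBox m N c.v ∧
      inBox m N (c.v + unit m c.i + unit m c.j + unit m c.k))

/-- The four edges in the boundary of a plaquette. -/
def plaqBoundary (m : ℕ) (p : Plaq m) : Finset (Edge m) :=
  {⟨p.v, p.i⟩, ⟨p.v, p.j⟩, ⟨p.v + unit m p.j, p.i⟩, ⟨p.v + unit m p.i, p.j⟩}

/-- The six plaquettes in the boundary of a 3-cell. -/
def cellBoundary (m : ℕ) (c : Cell3 m) : Finset (Plaq m) :=
  {⟨c.v, c.i, c.j⟩, ⟨c.v, c.i, c.k⟩, ⟨c.v, c.j, c.k⟩,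
   ⟨c.v + unit m c.k, c.i, c.j⟩, ⟨c.v + unit m c.j, c.i, c.k⟩, ⟨c.v + unit m c.i, c.j, c.k⟩}

/-- `ℤ₂`-valued 2-forms (as functions on plaquettes; in `ℤ₂` orientation is immaterial). -/
abbrev Form2 (m : ℕ) := Plaq m → ZMod 2

/-- Exterior derivative of a 1-form. -/
def d1 (m : ℕ) (σ : Edge m → ZMod 2) : Form2 m := fun p => ∑ e ∈ plaqBoundary m p, σ e

/-- Exterior derivative of a 2-form, evaluated at a 3-cell. -/
def d2 (m : ℕ) (ω : Form2 m) (c : Cell3 m) : ZMod 2 := ∑ p ∈ cellBoundary m c, ω p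

/-- The (positively oriented) support of a 2-form within `B_N`: this is `(supp ω)^+`,
so the number of oriented plaquettes in the support is `2 * (supp2 m N ω).card`. -/
def supp2 (m N : ℕ) (ω : Form2 m) : Finset (Plaq m) := (plaqFinset m N).filter (fun p => ω p ≠ 0)

/-- The activity `φ_β(ω) = e^{-2β|supp ω|} = e^{-4β|(supp ω)^+|}`, complex `β`. -/
def wtC (m : ℕ) (β : ℂ) (N : ℕ) (ω : Form2 m) : ℂ :=
  Complex.exp (-(4 : ℂ) * β * ((supp2 m N ω).card : ℂ))

/-- The activity `φ_β(ω) = e^{-2β|supp ω|} = e^{-4β|(supp ω)^+|}`, real `β`. -/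
def wtR (m : ℕ) (β : ℝ) (N : ℕ) (ω : Form2 m) : ℝ :=
  Real.exp (-(4 : ℝ) * β * ((supp2 m N ω).card : ℝ))

/-- Gauge field configurations on `B_N`: `ℤ₂`-valued 1-forms on the edges of `B_N`. -/
abbrev Cfg (m N : ℕ) := {e // e ∈ edgeFinset m N} → ZMod 2

/-- Extension of a configuration on `B_N` by zero to all edges. -/
def extendE (m N : ℕ) (σ : Cfg m N) : Edge m → ZMod 2 :=
  fun e => if h : e ∈ edgeFinset m N then σ ⟨e, h⟩ else 0

/-- The partition function `Z_{β,N}`, complex inverse temperature. -/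
def Zc (m : ℕ) (β : ℂ) (N : ℕ) : ℂ := ∑ σ : Cfg m N, wtC m β N (d1 m (extendE m N σ))

/-- The partition function `Z_{β,N}`, real inverse temperature. -/
def Zr (m : ℕ) (β : ℝ) (N : ℕ) : ℝ := ∑ σ : Cfg m N, wtR m β N (d1 m (extendE m N σ))

/-- `σ(γ) = Σ_e γ[e]·σ(e) ∈ ℤ₂` for a 1-chain `γ` and a 1-form `σ`. -/
def pairing (m : ℕ) (γ : Edge m → ℤ) (σ : Edge m → ZMod 2) : ZMod 2 :=
  ∑ᶠ e : Edge m, (γ e : ZMod 2) * σ e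

/-- The Wilson loop observable `W_γ(σ) = ρ(σ(γ)) ∈ {±1}`. -/
def wilson (m : ℕ) (γ : Edge m → ℤ) (σ : Edge m → ZMod 2) : ℝ :=
  if pairing m γ σ = 0 then 1 else -1

/-- The finite-volume expectation `E_{β,N}[W_γ]`. -/
def expW (m : ℕ) (β : ℝ) (N : ℕ) (γ : Edge m → ℤ) : ℝ :=
  (∑ σ : Cfg m N, wilson m γ (extendE m N σ) * wtR m β N (d1 m (extendE m N σ))) / Zr m β N

/-- Support of a 1-chain. -/
def suppChain (m : ℕ) (γ : Edge m → ℤ) : Set (Edge m) := {e | γ e ≠ 0}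

/-- Boundary of a 1-chain, evaluated at a vertex. -/
def chainBd (m : ℕ) (γ : Edge m → ℤ) (x : Pt m) : ℤ :=
  ∑ i : Fin m, (γ ⟨x - unit m i, i⟩ - γ ⟨x, i⟩)

/-- A loop: a 1-chain with finite support, coefficients in `{-1,0,1}` and vanishing boundary. -/
def IsLoop (m : ℕ) (γ : Edge m → ℤ) : Prop :=
  (suppChain m γ).Finite ∧ (∀ e, γ e = -1 ∨ γ e = 0 ∨ γ e = 1) ∧ ∀ x, chainBd m γ x = 0

/-- The two endpoints of an edge. -/
def edgePts (m : ℕ) (e : Edge m) : Set (Pt m) := {e.v, e.v + unit m e.dir}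

/-- The four vertices of a plaquette. -/
def plaqPts (m : ℕ) (p : Plaq m) : Set (Pt m) :=
  {p.v, p.v + unit m p.i, p.v + unit m p.j, p.v + unit m p.i + unit m p.j}

/-- The edges of the support of `γ` incident to a vertex `x`. -/
def edgesAt (m : ℕ) (γ : Edge m → ℤ) (x : Pt m) : Set (Edge m) :=
  {e | e ∈ suppChain m γ ∧ x ∈ edgePts m e}

/-- A simple loop: a nonempty loop whose support forms a single vertex-disjoint cycle. -/
def IsSimpleLoop (m : ℕ) (γ : Edge m → ℤ) : Prop :=
  IsLoop m γ ∧ (suppChain m γ).Nonempty ∧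
  (∀ x : Pt m, (edgesAt m γ x).ncard = 0 ∨ (edgesAt m γ x).ncard = 2) ∧
  ∀ e ∈ suppChain m γ, ∀ e' ∈ suppChain m γ,
    Relation.ReflTransGen
      (fun a b : Edge m =>
        a ∈ suppChain m γ ∧ b ∈ suppChain m γ ∧ (edgePts m a ∩ edgePts m b).Nonempty) e e'

/-- Coefficient of the edge `e` in the boundary 1-chain of the plaquette `p`. -/
def bdCoeff (m : ℕ) (p : Plaq m) (e : Edge m) : ℤ :=
  (if e = (⟨p.v, p.i⟩ : Edge m) then 1 else 0)
    + (if e = (⟨p.v + unit m p.i, p.j⟩ : Edge m) then 1 else 0)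
    - (if e = (⟨p.v + unit m p.j, p.i⟩ : Edge m) then 1 else 0)
    - (if e = (⟨p.v, p.j⟩ : Edge m) then 1 else 0)

/-- Boundary of a 2-chain, evaluated at an edge. -/
def chain2Bd (m : ℕ) (q : Plaq m → ℤ) (e : Edge m) : ℤ := ∑ᶠ p : Plaq m, q p * bdCoeff m p e

/-- `q` is an oriented surface with boundary `γ`: a finitely supported 2-chain
(supported on positively oriented plaquettes) with `∂q = γ`. -/
def IsSurfaceFor (m : ℕ) (q : Plaq m → ℤ) (γ : Edge m → ℤ) : Prop :=
  {p : Plaq m | q p ≠ 0}.Finite ∧ (∀ p, q p ≠ 0 → p.i < p.j) ∧ ∀ e, chain2Bd m q e = γ e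

/-- Evaluation `ω(q) = Σ_p q[p]·ω(p) ∈ ℤ₂` of a 2-form on a 2-chain. -/
def eval2 (m : ℕ) (ω : Form2 m) (q : Plaq m → ℤ) : ZMod 2 :=
  ∑ᶠ p : Plaq m, (q p : ZMod 2) * ω p

/-- The 2-form `ω` is supported in `B_N`. -/
def supportedIn (m N : ℕ) (ω : Form2 m) : Prop := ∀ p, p ∉ plaqFinset m N → ω p = 0

/-- The 2-form `ω` is closed: `dω = 0` on every 3-cell of `B_N`. -/
def IsClosed2 (m N : ℕ) (ω : Form2 m) : Prop := ∀ c ∈ cell3Finset m N, d2 m ω c = 0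

/-- Adjacency in the graph `𝒢₂` of positively oriented plaquettes: the supports of the
coboundaries intersect, i.e. the two (distinct) plaquettes lie in the boundary of a
common 3-cell of `B_N`. -/
def plaqAdj (m N : ℕ) (p₁ p₂ : Plaq m) : Prop :=
  p₁ ≠ p₂ ∧ ∃ c ∈ cell3Finset m N, p₁ ∈ cellBoundary m c ∧ p₂ ∈ cellBoundary m c

/-- A set of plaquettes induces a connected subgraph of `𝒢₂`. -/
def connectedIn (m N : ℕ) (S : Finset (Plaq m)) : Prop :=
  ∀ p ∈ S, ∀ p' ∈ S,
    Relation.ReflTransGen (fun a b => a ∈ S ∧ b ∈ S ∧ plaqAdj m N a b) p p'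

/-- A vortex: a nonzero closed 2-form supported in `B_N` whose support induces a
connected subgraph of `𝒢₂`. -/
def IsVortex (m N : ℕ) (ω : Form2 m) : Prop :=
  ω ≠ 0 ∧ supportedIn m N ω ∧ IsClosed2 m N ω ∧ connectedIn m N (supp2 m N ω)

/-- `ν ∼ ν'`: some plaquettes of the supports coincide or are adjacent in `𝒢₂`. -/
def vSim (m N : ℕ) (ν ν' : Form2 m) : Prop :=
  ∃ p ∈ supp2 m N ν, ∃ p' ∈ supp2 m N ν', p = p' ∨ plaqAdj m N p p'

/-- A vortex cluster: a nonempty finite multiset of vortices admitting no splitting into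
two nonempty sub-multisets that are pairwise non-interacting. -/
def IsCluster (m N : ℕ) (V : Multiset (Form2 m)) : Prop :=
  V ≠ 0 ∧ (∀ ν ∈ V, IsVortex m N ν) ∧
    ¬∃ V₁ V₂ : Multiset (Form2 m), V₁ ≠ 0 ∧ V₂ ≠ 0 ∧ V = V₁ + V₂ ∧
      ∀ ν₁ ∈ V₁, ∀ ν₂ ∈ V₂, ¬vSim m N ν₁ ν₂

/-- The set `Ξ` of vortex clusters, as a type. -/
abbrev Cluster (m N : ℕ) := {V : Multiset (Form2 m) // IsCluster m N V}

/-- `|𝒱| = Σ_ν n_𝒱(ν)·|(supp ν)^+|`. -/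
def clusterSize (m N : ℕ) (V : Multiset (Form2 m)) : ℕ :=
  (V.map (fun ν => (supp2 m N ν).card)).sum

/-- `supp 𝒱 = ∪_{ν ∈ 𝒱} supp ν` (positively oriented plaquettes). -/
def clusterSupp (m N : ℕ) (V : Multiset (Form2 m)) : Set (Plaq m) :=
  {p | ∃ ν ∈ V, p ∈ supp2 m N ν}

/-- `𝒱(q) = Σ_ν n_𝒱(ν)·ν(q) ∈ ℤ₂`. -/
def evalCluster (m : ℕ) (V : Multiset (Form2 m)) (q : Plaq m → ℤ) : ZMod 2 :=
  (V.map (fun ν => eval2 m ν q)).sum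

/-- The Ursell function `U(𝒱)`: for an enumeration `ν₁, …, ν_k` of `𝒱` with multiplicity,
the sum of `(-1)^{#edges}` over all connected graphs on `{1, …, k}` all of whose edges
`{i,j}` satisfy `ν_i ∼ ν_j`. -/
def ursell (m N : ℕ) (V : Multiset (Form2 m)) : ℤ :=
  ∑ E ∈ Finset.univ.filter
      (fun E : Finset (Sym2 (Fin V.toList.length)) =>
        (∀ e ∈ E, ¬e.IsDiag) ∧
        (∀ i j : Fin V.toList.length, s(i, j) ∈ E → vSim m N (V.toList.get i) (V.toList.get j)) ∧
        (∀ a b : Fin V.toList.length, Relation.ReflTransGen (fun x y => s(x, y) ∈ E) a b)),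
    (-1 : ℤ) ^ E.card

/-- `Ψ_β(𝒱) = U(𝒱)·φ_β(𝒱) = U(𝒱)·e^{-4β|𝒱|}`, complex `β`. -/
def PsiC (m : ℕ) (β : ℂ) (N : ℕ) (V : Multiset (Form2 m)) : ℂ :=
  (ursell m N V : ℂ) * Complex.exp (-(4 : ℂ) * β * (clusterSize m N V : ℂ))

/-- `Ψ_β(𝒱) = U(𝒱)·φ_β(𝒱) = U(𝒱)·e^{-4β|𝒱|}`, real `β`. -/
def PsiR (m : ℕ) (β : ℝ) (N : ℕ) (V : Multiset (Form2 m)) : ℝ :=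
  (ursell m N V : ℝ) * Real.exp (-(4 : ℝ) * β * (clusterSize m N V : ℝ))

/-- The representation `ρ : ℤ₂ → ℝ`, `g ↦ e^{iπg}`. -/
def rho (g : ZMod 2) : ℝ := if g = 0 then 1 else -1

/-- `Ψ_{β,q}(𝒱) = Ψ_β(𝒱)·ρ(𝒱(q))`. -/
def PsiRq (m : ℕ) (β : ℝ) (N : ℕ) (q : Plaq m → ℤ) (V : Multiset (Form2 m)) : ℝ :=
  PsiR m β N V * rho (evalCluster m V q)

/-- `β₀(m) = (1/2)·log(10(m-2)) + 1/6`. -/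
def beta0 (m : ℕ) : ℝ := Real.log (10 * ((m : ℝ) - 2)) / 2 + 1 / 6

/-- The `ℓ¹`-distance on `ℤ^m`. -/
def dist1 (m : ℕ) (x y : Pt m) : ℕ := ∑ i, (x i - y i).natAbs

/-- The boundary of the box `B_N`. -/
def boxBoundary (m N : ℕ) : Set (Pt m) := {x | inBox m N x ∧ ∃ i, |x i| = (N : ℤ)}

/-- The support of `γ` is at `ℓ¹`-distance greater than `d` from the boundary of `B_N`. -/
def farFromBoundary (m N d : ℕ) (γ : Edge m → ℤ) : Prop :=
  ∀ e ∈ suppChain m γ, ∀ x ∈ edgePts m e, ∀ y ∈ boxBoundary m N, d < dist1 m x y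

/-- Corners of `γ`: pairs of non-parallel edges of `γ` lying in the boundary of a
common plaquette, so `ℓ_c(γ) = (corners m γ).ncard`. -/
def corners (m : ℕ) (γ : Edge m → ℤ) : Set (Sym2 (Edge m)) :=
  {s | ∃ e e' : Edge m, s = s(e, e') ∧ e ∈ suppChain m γ ∧ e' ∈ suppChain m γ ∧
    e.dir ≠ e'.dir ∧ ∃ p : Plaq m, p.i < p.j ∧ e ∈ plaqBoundary m p ∧ e' ∈ plaqBoundary m p}

/-- Bottlenecks of `γ`: pairs of distinct parallel edges of `γ` lying in the boundary of a
common plaquette, so `ℓ_b(γ) = (bottlenecks m γ).ncard`. -/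
def bottlenecks (m : ℕ) (γ : Edge m → ℤ) : Set (Sym2 (Edge m)) :=
  {s | ∃ e e' : Edge m, s = s(e, e') ∧ e ∈ suppChain m γ ∧ e' ∈ suppChain m γ ∧
    e ≠ e' ∧ e.dir = e'.dir ∧ ∃ p : Plaq m, p.i < p.j ∧ e ∈ plaqBoundary m p ∧ e' ∈ plaqBoundary m p}

/-- The boundary 1-chain of the `R × T` rectangle based at `x` in the plane
spanned by the directions `i, j`. -/
def rectLoopF (m : ℕ) (x : Pt m) (i j : Fin m) (R T : ℕ) : Edge m → ℤ := fun e =>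
  (if e.dir = i ∧ ∃ a : ℕ, a < R ∧ e.v = x + (a : ℤ) • unit m i then 1 else 0)
    + (if e.dir = j ∧ ∃ b : ℕ, b < T ∧ e.v = x + (R : ℤ) • unit m i + (b : ℤ) • unit m j then 1 else 0)
    - (if e.dir = i ∧ ∃ a : ℕ, a < R ∧ e.v = x + (a : ℤ) • unit m i + (T : ℤ) • unit m j then 1 else 0)
    - (if e.dir = j ∧ ∃ b : ℕ, b < T ∧ e.v = x + (b : ℤ) • unit m j then 1 else 0)

/-- `γ` is an axis-parallel rectangular loop with side lengths `R` and `T`. -/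
def IsRectLoop (m : ℕ) (R T : ℕ) (γ : Edge m → ℤ) : Prop :=
  ∃ (x : Pt m) (i j : Fin m), i ≠ j ∧ γ = rectLoopF m x i j R T

/-- The set of values `Σ_{𝒱 ∈ Ξ(B_N) : p ∈ supp 𝒱} |Ψ_{β*}(𝒱)|` over all `N` and `p`. -/
def CbetaSet (m : ℕ) (βs : ℝ) : Set ℝ :=
  {x | ∃ (N : ℕ) (p : Plaq m),
    x = ∑' V : {V : Multiset (Form2 m) // IsCluster m N V ∧ p ∈ clusterSupp m N V},
          |PsiR m βs N V.1|}

/-- `C_{β*} = sup_{N,p} Σ_{𝒱 ∈ Ξ(B_N) : p ∈ supp 𝒱} |Ψ_{β*}(𝒱)|`. -/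
def Cbeta (m : ℕ) (βs : ℝ) : ℝ := sSup (CbetaSet m βs)

/-- The `ℓ¹`-distance between a set of plaquettes and a set of edges
(via their vertex sets). -/
def plaqEdgeSetDist (m : ℕ) (S : Set (Plaq m)) (T : Set (Edge m)) : ℕ :=
  sInf {d : ℕ | ∃ p ∈ S, ∃ e ∈ T, ∃ x ∈ plaqPts m p, ∃ y ∈ edgePts m e, d = dist1 m x y}

end LGT
open LGT

/-- **Lemma (lower bound on the total side length of a box)**: if `x` lies in a box with
side lengths `s₁, …, s_m` and every face of the box contains a point at `ℓ¹`-distance at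
least `j` from `x`, then `Σ sᵢ ≥ j·m/(m-1)`. -/
theorem statement18 (m : ℕ) (hm : 3 ≤ m) (j : ℕ) (hj : 1 ≤ j)
    (x a : Pt m) (s : Fin m → ℕ)
    (hx : ∀ i, a i ≤ x i ∧ x i ≤ a i + (s i : ℤ))
    (hface : ∀ i : Fin m,
      (∃ y : Pt m, (∀ l, a l ≤ y l ∧ y l ≤ a l + (s l : ℤ)) ∧ y i = a i ∧
          j ≤ dist1 m x y) ∧
      (∃ y : Pt m, (∀ l, a l ≤ y l ∧ y l ≤ a l + (s l : ℤ)) ∧ y i = a i + (s i : ℤ) ∧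
          j ≤ dist1 m x y)) :
    (j : ℝ) * (m : ℝ) / ((m : ℝ) - 1) ≤ ∑ i, (s i : ℝ) := by

  set M : Fin m → ℤ := fun l => max (x l - a l) (a l + (s l : ℤ) - x l) with hMdef
  have hMs : ∀ l, M l ≤ (s l : ℤ) := by
    intro l
    have h1 := (hx l).1
    have h2 := (hx l).2
    have : M l = max (x l - a l) (a l + (s l : ℤ) - x l) := rfl
    rw [this, max_le_iff]
    omega
  have habs : ∀ (y : Pt m), (∀ l, a l ≤ y l ∧ y l ≤ a l + (s l : ℤ)) →
      ∀ l, |x l - y l| ≤ M l := by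
    intro y hy l
    have h1 : x l - a l ≤ M l := le_max_left _ _
    have h2 : a l + (s l : ℤ) - x l ≤ M l := le_max_right _ _
    have h3 := hy l
    rw [abs_le]
    omega
  have hdist : ∀ (y : Pt m), (dist1 m x y : ℤ) = ∑ l, |x l - y l| := by
    intro y
    unfold dist1
    push_cast
    rfl
  have facebd : ∀ (y : Pt m), (∀ l, a l ≤ y l ∧ y l ≤ a l + (s l : ℤ)) →
      ∀ i, (dist1 m x y : ℤ) ≤ |x i - y i| + ∑ l, M l - M i := by
    intro y hy i
    rw [hdist y]
    have h1 : ∑ l, |x l - y l| = |x i - y i| + ∑ l ∈ Finset.univ.erase i, |x l - y l| :=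
      (Finset.add_sum_erase _ _ (Finset.mem_univ i)).symm
    have h2 : ∑ l, M l = M i + ∑ l ∈ Finset.univ.erase i, M l :=
      (Finset.add_sum_erase _ _ (Finset.mem_univ i)).symm
    have h3 : ∑ l ∈ Finset.univ.erase i, |x l - y l| ≤ ∑ l ∈ Finset.univ.erase i, M l :=
      Finset.sum_le_sum fun l _ => habs y hy l
    omega
  have key : ∀ i, (j : ℤ) + 2 * M i ≤ (s i : ℤ) + ∑ l, M l := by
    intro i
    obtain ⟨⟨y1, hy1, hy1i, hd1⟩, ⟨y2, hy2, hy2i, hd2⟩⟩ := hface i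
    have b1 := facebd y1 hy1 i
    have b2 := facebd y2 hy2 i
    have e1 : |x i - y1 i| = x i - a i := by
      rw [hy1i, abs_of_nonneg]
      have := (hx i).1; omega
    have e2 : |x i - y2 i| = a i + (s i : ℤ) - x i := by
      have := (hx i).2
      rw [hy2i, abs_of_nonpos (by omega)]
      ring
    have hd1' : (j : ℤ) ≤ (dist1 m x y1 : ℤ) := by exact_mod_cast hd1
    have hd2' : (j : ℤ) ≤ (dist1 m x y2 : ℤ) := by exact_mod_cast hd2
    have hc : M i = x i - a i ∨ M i = a i + (s i : ℤ) - x i :=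
      max_choice (x i - a i) (a i + (s i : ℤ) - x i)
    rw [e1] at b1
    rw [e2] at b2
    omega
  have hsumkey := Finset.sum_le_sum (fun i (_ : i ∈ Finset.univ) => key i)
  rw [Finset.sum_add_distrib, Finset.sum_add_distrib, Finset.sum_const, Finset.sum_const,
    Finset.card_univ, Fintype.card_fin, ← Finset.mul_sum] at hsumkey
  have hMsum : ∑ l, M l ≤ ∑ l, (s l : ℤ) := Finset.sum_le_sum fun l _ => hMs l
  have hMnn : (0 : ℤ) ≤ ∑ l, M l := Finset.sum_nonneg fun l _ => by
    have h1 := (hx l).1; have h2 := (hx l).2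
    have : x l - a l ≤ M l := le_max_left _ _
    omega
  have hm3 : (3 : ℤ) ≤ (m : ℤ) := by exact_mod_cast hm
  have hfin : (m : ℤ) * j ≤ ((m : ℤ) - 1) * ∑ l, (s l : ℤ) := by
    have hmul : ((m : ℤ) - 2) * ∑ l, M l ≤ ((m : ℤ) - 2) * ∑ l, (s l : ℤ) :=
      mul_le_mul_of_nonneg_left hMsum (by omega)
    have hsmul1 : (m : ℤ) • (j : ℤ) = (m : ℤ) * j := by simp
    have hsmul2 : (m : ℤ) • (∑ l, M l) = (m : ℤ) * ∑ l, M l := by simp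
    simp only [nsmul_eq_mul] at hsumkey
    linarith
  have hm1 : (0 : ℝ) < (m : ℝ) - 1 := by
    have : (3 : ℝ) ≤ (m : ℝ) := by exact_mod_cast hm
    linarith
  rw [div_le_iff₀ hm1]
  have : ((m : ℤ) * j : ℝ) ≤ (((m : ℤ) - 1) * ∑ l, (s l : ℤ) : ℝ) := by exact_mod_cast hfin
  push_cast at this ⊢
  linarith
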